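/- arXiv:1709.08651 — 3 statements merged into one kernel-verified Lean document; each statement's English description precedes it below -/
import Mathlib

section
/- There exist δ₀ > 0, an integer N₀ and a constant C > 0 such that for every δ with |δ| ≤ δ₀ and every N > N₀: ‖B(δ)‖/μ ≤ (|δ|·‖HEᵀ + EHᵀ‖ + δ²·‖EEᵀ‖)/μ ≤ C·(δ² + |δ|/N), and in particular ‖B(δ)‖/μ < 1/4. -/
/-!
Since `H = W_L W_Kᵀ` has rank one, each entry of `HEᵀ` is `W_L(i)` times a weighted sum
`∑ₖ W_K(k) cos(θ + ξk)`. The partial sums of `cos(θ + ξk)` are bounded by `1/|sin(ξ/2)|`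
(telescoping after multiplying by `2 sin(ξ/2)`), and Abel summation against the increasing
weights `1 ≤ W_K(k) ≤ a^T` bounds the weighted sums uniformly in `N`. Bounding spectral norms by
Frobenius norms then gives `‖HEᵀ + EHᵀ‖ = O(L)` and `‖EEᵀ‖ ≤ LK`, while `μ ≥ LK` because every
entry of `W` is at least `1`. As `K ≥ (1 - α)N/2` for large `N`, dividing by `μ` yields
`C(δ² + |δ|/N)`, which is below `1/4` once `|δ|` is small.
-/

open Filter Matrix

/-- Hankelization (diagonal averaging): the `j`-th value is the average of the
entries `Y i k` with `i + k = j`. -/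
noncomputable def hankelize {L K : ℕ} (Y : Matrix (Fin L) (Fin K) ℝ) (j : ℕ) : ℝ :=
  (∑ i : Fin L, ∑ k : Fin K, if (i : ℕ) + (k : ℕ) = j then Y i k else 0) /
  (∑ i : Fin L, ∑ k : Fin K, if (i : ℕ) + (k : ℕ) = j then (1 : ℝ) else 0)

/-- Squared Euclidean norm of a vector. -/
noncomputable def normSq {M : ℕ} (w : Fin M → ℝ) : ℝ := ∑ i, w i ^ 2

/-- `u` is a unit eigenvector of `A` corresponding to its largest eigenvalue. -/
def IsTopEigenvector {L : ℕ} (A : Matrix (Fin L) (Fin L) ℝ) (u : Fin L → ℝ) : Prop :=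
  normSq u = 1 ∧ ∃ μ : ℝ, A.mulVec u = μ • u ∧
    ∀ (ν : ℝ) (v : Fin L → ℝ), v ≠ 0 → A.mulVec v = ν • v → ν ≤ μ

/-- The discretized exponential signal `x_n = a^{nT/N}`. -/
noncomputable def xdisc (a T : ℝ) (N : ℕ) : ℕ → ℝ := fun n => a ^ ((n : ℝ) * T / (N : ℝ))

/-- The `L × K` Hankel matrix of the discretized signal. -/
noncomputable def Hd (a T : ℝ) (N L K : ℕ) : Matrix (Fin L) (Fin K) ℝ :=
  Matrix.of fun i k => xdisc a T N ((i : ℕ) + (k : ℕ))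

/-- The `L × K` Hankel matrix of the harmonic noise `e_n = cos(ξ n + φ)`. -/
noncomputable def Ed (ξ φ : ℝ) (L K : ℕ) : Matrix (Fin L) (Fin K) ℝ :=
  Matrix.of fun i k => Real.cos (ξ * (((i : ℕ) + (k : ℕ) : ℕ) : ℝ) + φ)

/-- The vector `W_M = (1, a^{T/N}, …, a^{(M-1)T/N})ᵀ`. -/
noncomputable def Wd (a T : ℝ) (N M : ℕ) : Fin M → ℝ := fun i => a ^ (((i : ℕ) : ℝ) * T / (N : ℝ))

/-- `B(δ) = δ(HEᵀ + EHᵀ) + δ²EEᵀ`. -/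
noncomputable def Bmat (a T ξ φ δ : ℝ) (N L K : ℕ) : Matrix (Fin L) (Fin L) ℝ :=
  δ • (Hd a T N L K * (Ed ξ φ L K)ᵀ + Ed ξ φ L K * (Hd a T N L K)ᵀ)
  + δ ^ 2 • (Ed ξ φ L K * (Ed ξ φ L K)ᵀ)

/-- The spectral (ℓ²-operator) norm of a matrix. -/
noncomputable def specNorm {m n : ℕ} (A : Matrix (Fin m) (Fin n) ℝ) : ℝ :=
  ‖(Matrix.toEuclideanLin A).toContinuousLinearMap‖

/-- The max-norm of a matrix: the maximum of the absolute values of its entries. -/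
noncomputable def maxNorm {m n : ℕ} (A : Matrix (Fin m) (Fin n) ℝ) : ℝ :=
  ⨆ p : Fin m × Fin n, |A p.1 p.2|

open Finset Real

section SpecNorm

variable {m n : ℕ}

lemma specNorm_add_le (A B : Matrix (Fin m) (Fin n) ℝ) :
    specNorm (A + B) ≤ specNorm A + specNorm B := by
  unfold specNorm
  rw [map_add, map_add]
  exact norm_add_le _ _

lemma specNorm_smul (c : ℝ) (A : Matrix (Fin m) (Fin n) ℝ) :
    specNorm (c • A) = |c| * specNorm A := by
  unfold specNorm
  rw [map_smul, map_smul, norm_smul, Real.norm_eq_abs]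

lemma specNorm_le_sqrt_sum_sq (A : Matrix (Fin m) (Fin n) ℝ) :
    specNorm A ≤ √(∑ i, ∑ j, A i j ^ 2) := by
  refine ContinuousLinearMap.opNorm_le_bound _ (Real.sqrt_nonneg _) fun x => ?_
  rw [EuclideanSpace.norm_eq, EuclideanSpace.norm_eq, ← Real.sqrt_mul (by positivity)]
  refine Real.sqrt_le_sqrt ?_
  rw [sum_mul]
  refine sum_le_sum fun i _ => ?_
  simp only [Real.norm_eq_abs, sq_abs]
  exact sum_mul_sq_le_sq_mul_sq univ (A i) (x.ofLp)

lemma specNorm_le_of_abs_apply_le (A : Matrix (Fin m) (Fin n) ℝ) {c : ℝ} (hc : 0 ≤ c)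
    (h : ∀ i j, |A i j| ≤ c) : specNorm A ≤ √((m : ℝ) * n) * c := by
  refine (specNorm_le_sqrt_sum_sq A).trans ?_
  rw [← Real.sqrt_sq hc, ← Real.sqrt_mul (by positivity)]
  refine Real.sqrt_le_sqrt ?_
  calc ∑ i, ∑ j, A i j ^ 2 ≤ ∑ _i : Fin m, ∑ _j : Fin n, c ^ 2 :=
        sum_le_sum fun i _ => sum_le_sum fun j _ => sq_le_sq.2 ((h i j).trans (le_abs_self c))
    _ = m * n * c ^ 2 := by simp; ring

lemma specNorm_le_of_abs_apply_le_of_square (A : Matrix (Fin m) (Fin m) ℝ) {c : ℝ} (hc : 0 ≤ c)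
    (h : ∀ i j, |A i j| ≤ c) : specNorm A ≤ m * c := by
  simpa [Real.sqrt_mul_self (Nat.cast_nonneg m)] using specNorm_le_of_abs_apply_le A hc h

end SpecNorm

lemma abs_sum_range_mul_le_of_monotone {b c : ℕ → ℝ} {S : ℝ} (hb : Monotone b) (hb0 : 0 ≤ b 0)
    (hc : ∀ m, |∑ k ∈ range m, c k| ≤ S) (n : ℕ) :
    |∑ k ∈ range n, b k * c k| ≤ 2 * S * b (n - 1) := by
  have hS : 0 ≤ S := by simpa using hc 0
  have hbn : 0 ≤ b (n - 1) := hb0.trans (hb (Nat.zero_le _))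
  have hlast : |b (n - 1) * ∑ k ∈ range n, c k| ≤ S * b (n - 1) := by
    rw [abs_mul, abs_of_nonneg hbn, mul_comm]
    exact mul_le_mul_of_nonneg_right (hc n) hbn
  have hincr : |∑ i ∈ range (n - 1), (b (i + 1) - b i) * ∑ k ∈ range (i + 1), c k|
      ≤ S * b (n - 1) := by
    calc _ ≤ ∑ i ∈ range (n - 1), (b (i + 1) - b i) * S := by
          refine (abs_sum_le_sum_abs _ _).trans (sum_le_sum fun i _ => ?_)
          have hi : 0 ≤ b (i + 1) - b i := sub_nonneg.2 (hb (Nat.le_succ i))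
          rw [abs_mul, abs_of_nonneg hi]
          exact mul_le_mul_of_nonneg_left (hc _) hi
      _ = (b (n - 1) - b 0) * S := by rw [← sum_mul, sum_range_sub b]
      _ ≤ S * b (n - 1) := by nlinarith
  have hparts := sum_range_by_parts b c n
  simp only [smul_eq_mul] at hparts
  rw [hparts]
  linarith [abs_sub (b (n - 1) * ∑ k ∈ range n, c k)
    (∑ i ∈ range (n - 1), (b (i + 1) - b i) * ∑ k ∈ range (i + 1), c k)]

lemma two_mul_sin_half_mul_sum_range_cos (θ ξ : ℝ) (m : ℕ) :
    2 * sin (ξ / 2) * ∑ k ∈ range m, cos (θ + ξ * k) =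
      sin (θ + ξ * (m - 1 / 2)) - sin (θ - ξ / 2) := by
  rw [mul_sum]
  convert sum_range_sub (fun k : ℕ => sin (θ + ξ * (k - 1 / 2))) m using 1
  · refine sum_congr rfl fun k _ => ?_
    rw [sin_sub_sin]
    push_cast
    ring_nf
  · simp only [Nat.cast_zero]
    ring_nf

lemma abs_sum_range_cos_le {ξ : ℝ} (hξ : sin (ξ / 2) ≠ 0) (θ : ℝ) (m : ℕ) :
    |∑ k ∈ range m, cos (θ + ξ * k)| ≤ 1 / |sin (ξ / 2)| := by
  have hs : 0 < |sin (ξ / 2)| := abs_pos.2 hξ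
  rw [le_div_iff₀ hs, mul_comm]
  have h := congrArg abs (two_mul_sin_half_mul_sum_range_cos θ ξ m)
  rw [abs_mul, abs_mul, abs_two] at h
  have := abs_sub (sin (θ + ξ * (m - 1 / 2))) (sin (θ - ξ / 2))
  have := abs_sin_le_one (θ + ξ * (m - 1 / 2))
  have := abs_sin_le_one (θ - ξ / 2)
  nlinarith [abs_nonneg (∑ k ∈ range m, cos (θ + ξ * k))]

section Signal

variable {a T : ℝ} {N : ℕ}

lemma xdisc_add (ha : 0 < a) (m n : ℕ) : xdisc a T N (m + n) = xdisc a T N m * xdisc a T N n := by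
  unfold xdisc
  rw [← rpow_add ha]
  push_cast
  ring_nf

lemma xdisc_monotone (ha : 1 ≤ a) (hT : 0 ≤ T) : Monotone (xdisc a T N) := fun m n hmn => by
  unfold xdisc
  gcongr

lemma one_le_xdisc (ha : 1 ≤ a) (hT : 0 ≤ T) (n : ℕ) : 1 ≤ xdisc a T N n :=
  one_le_rpow ha (by positivity)

lemma xdisc_le_rpow (ha : 1 ≤ a) (hT : 0 ≤ T) {n : ℕ} (hn : n ≤ N) : xdisc a T N n ≤ a ^ T := by
  refine rpow_le_rpow_of_exponent_le ha (div_le_of_le_mul₀ (Nat.cast_nonneg N) hT ?_)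
  rw [mul_comm T]
  exact mul_le_mul_of_nonneg_right (by exact_mod_cast hn) hT

lemma abs_sum_range_xdisc_mul_cos_le (ha : 1 ≤ a) (hT : 0 ≤ T) {ξ : ℝ} (hξ : sin (ξ / 2) ≠ 0)
    (θ : ℝ) {K : ℕ} (hK : K ≤ N + 1) :
    |∑ k ∈ range K, xdisc a T N k * cos (θ + ξ * k)| ≤ 2 * a ^ T / |sin (ξ / 2)| := by
  have h := abs_sum_range_mul_le_of_monotone (xdisc_monotone (N := N) ha hT)
    (zero_le_one.trans (one_le_xdisc ha hT 0)) (abs_sum_range_cos_le hξ θ) K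
  calc _ ≤ 2 * (1 / |sin (ξ / 2)|) * xdisc a T N (K - 1) := h
    _ ≤ 2 * (1 / |sin (ξ / 2)|) * a ^ T := by gcongr; exact xdisc_le_rpow ha hT (by omega)
    _ = 2 * a ^ T / |sin (ξ / 2)| := by ring

lemma normSq_nonneg {M : ℕ} (w : Fin M → ℝ) : 0 ≤ normSq w :=
  sum_nonneg fun i _ => sq_nonneg (w i)

lemma le_normSq_Wd (ha : 1 ≤ a) (hT : 0 ≤ T) (M : ℕ) : (M : ℝ) ≤ normSq (Wd a T N M) := by
  calc (M : ℝ) = ∑ _i : Fin M, 1 := by simp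
    _ ≤ normSq (Wd a T N M) := sum_le_sum fun i _ => one_le_pow₀ (one_le_xdisc ha hT i)

lemma Hd_apply (ha : 0 < a) {L K : ℕ} (i : Fin L) (k : Fin K) :
    Hd a T N L K i k = Wd a T N L i * Wd a T N K k :=
  xdisc_add ha i k

end Signal

lemma Ed_apply (ξ φ : ℝ) {L K : ℕ} (i : Fin L) (k : Fin K) :
    Ed ξ φ L K i k = cos ((ξ * (i : ℕ) + φ) + ξ * (k : ℕ)) := by
  simp only [Ed, Matrix.of_apply]
  push_cast
  ring_nf

section Perturbation

variable {a T ξ : ℝ} {N L K : ℕ}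

lemma abs_Hd_mul_Ed_transpose_apply_le (ha : 1 ≤ a) (hT : 0 ≤ T) (hξ : sin (ξ / 2) ≠ 0)
    (hL : L ≤ N + 1) (hK : K ≤ N + 1) (φ : ℝ) (i j : Fin L) :
    |(Hd a T N L K * (Ed ξ φ L K)ᵀ) i j| ≤ 2 * (a ^ T) ^ 2 / |sin (ξ / 2)| := by
  have hrow : (Hd a T N L K * (Ed ξ φ L K)ᵀ) i j =
      xdisc a T N i * ∑ k ∈ range K, xdisc a T N k * cos ((ξ * (j : ℕ) + φ) + ξ * k) := by
    rw [Matrix.mul_apply,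
      ← Fin.sum_univ_eq_sum_range (fun k => xdisc a T N k * cos ((ξ * (j : ℕ) + φ) + ξ * k)),
      mul_sum]
    refine sum_congr rfl fun k _ => ?_
    rw [Matrix.transpose_apply, Hd_apply (zero_lt_one.trans_le ha), Ed_apply, mul_assoc]
    rfl
  have hi : xdisc a T N i ≤ a ^ T := xdisc_le_rpow ha hT (by omega)
  have hi0 : 0 ≤ xdisc a T N i := zero_le_one.trans (one_le_xdisc ha hT i)
  rw [hrow, abs_mul, abs_of_nonneg hi0]
  calc _ ≤ a ^ T * (2 * a ^ T / |sin (ξ / 2)|) :=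
        mul_le_mul hi (abs_sum_range_xdisc_mul_cos_le ha hT hξ _ hK) (abs_nonneg _)
          (zero_le_one.trans (one_le_rpow ha hT))
    _ = 2 * (a ^ T) ^ 2 / |sin (ξ / 2)| := by ring

lemma specNorm_Hd_mul_Ed_transpose_add_le (ha : 1 ≤ a) (hT : 0 ≤ T) (hξ : sin (ξ / 2) ≠ 0)
    (hL : L ≤ N + 1) (hK : K ≤ N + 1) (φ : ℝ) :
    specNorm (Hd a T N L K * (Ed ξ φ L K)ᵀ + Ed ξ φ L K * (Hd a T N L K)ᵀ) ≤
      L * (4 * (a ^ T) ^ 2 / |sin (ξ / 2)|) := by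
  refine specNorm_le_of_abs_apply_le_of_square _ (by positivity) fun i j => ?_
  have hsymm : (Ed ξ φ L K * (Hd a T N L K)ᵀ) i j = (Hd a T N L K * (Ed ξ φ L K)ᵀ) j i := by
    rw [← Matrix.transpose_transpose (Ed ξ φ L K * _), Matrix.transpose_mul,
      Matrix.transpose_transpose, Matrix.transpose_apply]
  rw [Matrix.add_apply, hsymm]
  have hij := abs_Hd_mul_Ed_transpose_apply_le ha hT hξ hL hK φ i j
  have hji := abs_Hd_mul_Ed_transpose_apply_le ha hT hξ hL hK φ j i
  have htwice : 4 * (a ^ T) ^ 2 / |sin (ξ / 2)| =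
      2 * (2 * (a ^ T) ^ 2 / |sin (ξ / 2)|) := by ring
  linarith [abs_add_le ((Hd a T N L K * (Ed ξ φ L K)ᵀ) i j) ((Hd a T N L K * (Ed ξ φ L K)ᵀ) j i)]

lemma specNorm_Ed_mul_transpose_le (ξ φ : ℝ) (L K : ℕ) :
    specNorm (Ed ξ φ L K * (Ed ξ φ L K)ᵀ) ≤ L * K := by
  refine specNorm_le_of_abs_apply_le_of_square _ (Nat.cast_nonneg K) fun i j => ?_
  rw [Matrix.mul_apply]
  refine (abs_sum_le_sum_abs _ _).trans ?_
  calc _ ≤ ∑ _k : Fin K, (1 : ℝ) := sum_le_sum fun k _ => by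
        rw [abs_mul]
        exact mul_le_one₀ (abs_cos_le_one _) (abs_nonneg _) (abs_cos_le_one _)
    _ = K := by simp

lemma specNorm_Bmat_le (a T ξ φ δ : ℝ) (N L K : ℕ) :
    specNorm (Bmat a T ξ φ δ N L K) ≤
      |δ| * specNorm (Hd a T N L K * (Ed ξ φ L K)ᵀ + Ed ξ φ L K * (Hd a T N L K)ᵀ) +
        δ ^ 2 * specNorm (Ed ξ φ L K * (Ed ξ φ L K)ᵀ) := by
  refine (specNorm_add_le _ _).trans_eq ?_
  rw [specNorm_smul, specNorm_smul, abs_of_nonneg (sq_nonneg δ)]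

lemma perturbation_div_normSq_le (ha : 1 ≤ a) (hT : 0 ≤ T) (hξ : sin (ξ / 2) ≠ 0)
    (hL₀ : 0 < L) (hK₀ : 0 < K) (hL : L ≤ N + 1) (hK : K ≤ N + 1) (φ δ : ℝ) :
    (|δ| * specNorm (Hd a T N L K * (Ed ξ φ L K)ᵀ + Ed ξ φ L K * (Hd a T N L K)ᵀ) +
        δ ^ 2 * specNorm (Ed ξ φ L K * (Ed ξ φ L K)ᵀ)) /
        (normSq (Wd a T N L) * normSq (Wd a T N K)) ≤
      δ ^ 2 + |δ| * (4 * (a ^ T) ^ 2 / |sin (ξ / 2)|) / K := by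
  have hLpos : (0 : ℝ) < L := by exact_mod_cast hL₀
  have hKpos : (0 : ℝ) < K := by exact_mod_cast hK₀
  have hμ : (L : ℝ) * K ≤ normSq (Wd a T N L) * normSq (Wd a T N K) :=
    mul_le_mul (le_normSq_Wd ha hT L) (le_normSq_Wd ha hT K) hKpos.le
      (hLpos.le.trans (le_normSq_Wd ha hT L))
  have hnum := add_le_add
    (mul_le_mul_of_nonneg_left (specNorm_Hd_mul_Ed_transpose_add_le ha hT hξ hL hK φ)
      (abs_nonneg δ))
    (mul_le_mul_of_nonneg_left (specNorm_Ed_mul_transpose_le ξ φ L K) (sq_nonneg δ))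
  calc _ ≤ (|δ| * (L * (4 * (a ^ T) ^ 2 / |sin (ξ / 2)|)) + δ ^ 2 * (L * K)) / (L * K) :=
        div_le_div₀ (by positivity) hnum (by positivity) hμ
    _ = _ := by field_simp; ring

end Perturbation

lemma eventually_mul_le_of_add_eq_of_tendsto {L K : ℕ → ℕ} {α β : ℝ}
    (hLK : ∀ᶠ N in atTop, L N + K N = N + 1)
    (hlim : Tendsto (fun N : ℕ => (L N : ℝ) / N) atTop (nhds α)) (hβ : β < 1 - α) :
    ∀ᶠ N : ℕ in atTop, β * N ≤ K N := by
  filter_upwards [hlim.eventually_lt_const (by linarith : α < 1 - β), hLK,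
    eventually_gt_atTop 0] with N hL hsum hN
  have hNpos : (0 : ℝ) < N := by exact_mod_cast hN
  have hsumR : (L N : ℝ) + K N = N + 1 := by exact_mod_cast hsum
  have := (div_lt_iff₀ hNpos).1 hL
  linarith

lemma mul_sq_add_abs_div_lt {C δ x : ℝ} (hC : 1 ≤ C) (hδ : |δ| ≤ 1 / (16 * C)) (hx : 1 ≤ x) :
    C * (δ ^ 2 + |δ| / x) < 1 / 4 := by
  have hδ1 : |δ| ≤ 1 := hδ.trans (by rw [div_le_one (by positivity)]; linarith)
  have hsq : δ ^ 2 ≤ |δ| := by rw [← sq_abs]; nlinarith [abs_nonneg δ]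
  have hdiv : |δ| / x ≤ |δ| := div_le_self (abs_nonneg δ) hx
  have h16 : 16 * C * |δ| ≤ 1 := by rwa [le_div_iff₀' (by positivity)] at hδ
  nlinarith

theorem stmt_9_general (a T ξ φ α : ℝ) (ha : 1 < a) (hT : 0 < T)
    (hξ : ξ ∈ Set.Ioo 0 Real.pi)
    (hα : α ∈ Set.Ioo (0 : ℝ) 1)
    (L K : ℕ → ℕ)
    (hLK : ∀ N, 3 ≤ N → 1 < L N ∧ 1 < K N ∧ L N + K N = N + 1)
    (hlim : Tendsto (fun N : ℕ => (L N : ℝ) / (N : ℝ)) atTop (nhds α)) :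
    ∃ δ₀ > (0 : ℝ), ∃ N₀ : ℕ, ∃ C > (0 : ℝ), ∀ δ : ℝ, |δ| ≤ δ₀ → ∀ N : ℕ, N₀ < N →
      specNorm (Bmat a T ξ φ δ N (L N) (K N)) /
          (normSq (Wd a T N (L N)) * normSq (Wd a T N (K N))) ≤
        (|δ| * specNorm (Hd a T N (L N) (K N) * (Ed ξ φ (L N) (K N))ᵀ +
            Ed ξ φ (L N) (K N) * (Hd a T N (L N) (K N))ᵀ) +
          δ ^ 2 * specNorm (Ed ξ φ (L N) (K N) * (Ed ξ φ (L N) (K N))ᵀ)) /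
          (normSq (Wd a T N (L N)) * normSq (Wd a T N (K N))) ∧
      (|δ| * specNorm (Hd a T N (L N) (K N) * (Ed ξ φ (L N) (K N))ᵀ +
            Ed ξ φ (L N) (K N) * (Hd a T N (L N) (K N))ᵀ) +
          δ ^ 2 * specNorm (Ed ξ φ (L N) (K N) * (Ed ξ φ (L N) (K N))ᵀ)) /
          (normSq (Wd a T N (L N)) * normSq (Wd a T N (K N))) ≤
        C * (δ ^ 2 + |δ| / (N : ℝ)) ∧
      specNorm (Bmat a T ξ φ δ N (L N) (K N)) /
          (normSq (Wd a T N (L N)) * normSq (Wd a T N (K N))) < 1 / 4 := by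
  have hsin : sin (ξ / 2) ≠ 0 :=
    (sin_pos_of_pos_of_lt_pi (by linarith [hξ.1]) (by linarith [hξ.2, pi_pos])).ne'
  obtain ⟨β, hβ, hβα⟩ : ∃ β : ℝ, 0 < β ∧ β < 1 - α :=
    ⟨(1 - α) / 2, by linarith [hα.2], by linarith [hα.2]⟩
  set c := 4 * (a ^ T) ^ 2 / |sin (ξ / 2)|
  set C := max 1 (c / β)
  have hC : 1 ≤ C := le_max_left _ _
  obtain ⟨N₀, hN₀⟩ := eventually_atTop.1 <| (eventually_ge_atTop 3).and <|
    eventually_mul_le_of_add_eq_of_tendsto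
      ((eventually_ge_atTop 3).mono fun N hN => (hLK N hN).2.2) hlim hβα
  refine ⟨1 / (16 * C), by positivity, N₀, C, by positivity, fun δ hδ N hN => ?_⟩
  obtain ⟨hN3, hKβ⟩ := hN₀ N hN.le
  obtain ⟨hL, hK, hsum⟩ := hLK N hN3
  have hcK : c / K N ≤ C / N := calc
    c / K N ≤ c / (β * N) := by gcongr
    _ = c / β / N := (div_div _ _ _).symm
    _ ≤ C / N := by gcongr; exact le_max_right _ _
  have hfirst := div_le_div_of_nonneg_right (specNorm_Bmat_le a T ξ φ δ N (L N) (K N))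
    (mul_nonneg (normSq_nonneg (Wd a T N (L N))) (normSq_nonneg (Wd a T N (K N))))
  have hsecond := (perturbation_div_normSq_le (N := N) (L := L N) (K := K N) ha.le hT.le hsin
    (by omega) (by omega) (by omega) (by omega) φ δ).trans <|
    show δ ^ 2 + |δ| * c / K N ≤ C * (δ ^ 2 + |δ| / N) by
      rw [mul_div_assoc, show C * (δ ^ 2 + |δ| / N) = C * δ ^ 2 + |δ| * (C / N) by ring]
      linarith [mul_le_mul_of_nonneg_left hcK (abs_nonneg δ),
        mul_le_mul_of_nonneg_right hC (sq_nonneg δ)]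
  exact ⟨hfirst, hsecond, hfirst.trans_lt (hsecond.trans_lt
    (mul_sq_add_abs_div_lt hC hδ (by exact_mod_cast (by omega : 1 ≤ N))))⟩

/-- in the discretization scheme, `‖B(δ)‖/μ ≤ B(δ)/μ ≤ C(δ² + |δ|/N)`
and in particular `‖B(δ)‖/μ < 1/4` for small `δ` and large `N`. -/
theorem stmt_9 (a T ξ φ α : ℝ) (ha : 1 < a) (hT : 0 < T)
    (hξ : ξ ∈ Set.Ioo 0 Real.pi) (hφ : φ ∈ Set.Ico 0 (2 * Real.pi))
    (hα : α ∈ Set.Ioo (0 : ℝ) 1)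
    (L K : ℕ → ℕ)
    (hLK : ∀ N, 3 ≤ N → 1 < L N ∧ 1 < K N ∧ L N + K N = N + 1)
    (hlim : Tendsto (fun N : ℕ => (L N : ℝ) / (N : ℝ)) atTop (nhds α)) :
    ∃ δ₀ > (0 : ℝ), ∃ N₀ : ℕ, ∃ C > (0 : ℝ), ∀ δ : ℝ, |δ| ≤ δ₀ → ∀ N : ℕ, N₀ < N →
      specNorm (Bmat a T ξ φ δ N (L N) (K N)) /
          (normSq (Wd a T N (L N)) * normSq (Wd a T N (K N))) ≤
        (|δ| * specNorm (Hd a T N (L N) (K N) * (Ed ξ φ (L N) (K N))ᵀ +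
            Ed ξ φ (L N) (K N) * (Hd a T N (L N) (K N))ᵀ) +
          δ ^ 2 * specNorm (Ed ξ φ (L N) (K N) * (Ed ξ φ (L N) (K N))ᵀ)) /
          (normSq (Wd a T N (L N)) * normSq (Wd a T N (K N))) ∧
      (|δ| * specNorm (Hd a T N (L N) (K N) * (Ed ξ φ (L N) (K N))ᵀ +
            Ed ξ φ (L N) (K N) * (Hd a T N (L N) (K N))ᵀ) +
          δ ^ 2 * specNorm (Ed ξ φ (L N) (K N) * (Ed ξ φ (L N) (K N))ᵀ)) /
          (normSq (Wd a T N (L N)) * normSq (Wd a T N (K N))) ≤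
        C * (δ ^ 2 + |δ| / (N : ℝ)) ∧
      specNorm (Bmat a T ξ φ δ N (L N) (K N)) /
          (normSq (Wd a T N (L N)) * normSq (Wd a T N (K N))) < 1 / 4 :=
  stmt_9_general a T ξ φ α ha hT hξ hα L K hLK hlim
end

section
/- There exist δ₀ > 0, a constant C > 0 and an integer N₀ such that for every δ with |δ| ≤ δ₀, every N ≥ N₀ and every unit eigenvector u of H(δ)H(δ)ᵀ corresponding to its largest eigenvalue: ‖u uᵀ − P₀⊥‖ ≤ C/N, where ‖·‖ is the spectral norm. In other words, in the discretization scheme ‖P₀⊥(δ) − P₀⊥‖ = O(N^{−1}) as N → ∞ for sufficiently small δ. -/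
open Filter Matrix

/-!
The signal Hankel matrix has rank one, `H = W_L W_Kᵀ`, so `H Hᵀ = λ w wᵀ` with `w = W_L / ‖W_L‖`
and `λ = ‖W_L‖² ‖W_K‖² ≥ L K`, which is of order `N²`; moreover `H(δ) H(δ)ᵀ = λ w wᵀ + B(δ)`.
If `u` is a unit top eigenvector with eigenvalue `μ`, then `μ ≥ ⟪H(δ) H(δ)ᵀ w, w⟫ ≥ λ - ‖B‖`, and
projecting the eigen-equation onto `w⊥` kills the rank-one part:
`(λ - 2‖B‖) ‖u - ⟪w, u⟫ w‖ ≤ ‖B w‖`. Since `‖H‖, ‖E‖ = O(N)` we have `‖B‖ = O(|δ| N²)`, but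
`‖B w‖ = O(N)` only, because the noise is almost orthogonal to the signal: the entries of `E W_K`
and `Eᵀ W_L` are sums `∑ r^k cos(ξ k + c)` with `1 ≤ r ≤ a^{T/N}`, bounded uniformly in `N` by the
geometric-series formula as `ξ ∈ (0, π)`. Hence `‖u - ⟪w, u⟫ w‖ = O(1/N)`, and
`‖u uᵀ - w wᵀ‖ ≤ 3 ‖u - ⟪w, u⟫ w‖`.
-/

open InnerProductSpace RealInnerProductSpace WithLp
open scoped Matrix.Norms.L2Operator

section InnerProductSpace

variable {E : Type*} [NormedAddCommGroup E] [InnerProductSpace ℝ E]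

lemma rankOne_smul_smul (c : ℝ) (w : E) : rankOne ℝ (c • w) (c • w) = c ^ 2 • rankOne ℝ w w := by
  rw [map_smul, map_smulₛₗ, _root_.smul_apply, smul_smul, sq]
  rfl

section UnitVector

variable {w : E} (hw : ‖w‖ = 1)
include hw

lemma abs_inner_le_of_norm_eq_one (x : E) : |⟪w, x⟫| ≤ ‖x‖ :=
  (abs_real_inner_le_norm w x).trans_eq (by rw [hw, one_mul])

lemma norm_sub_inner_smul_sq (x : E) : ‖x - ⟪w, x⟫ • w‖ ^ 2 = ‖x‖ ^ 2 - ⟪w, x⟫ ^ 2 := by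
  rw [norm_sub_sq_real, norm_smul, hw, inner_smul_right, real_inner_comm, Real.norm_eq_abs]
  ring_nf; rw [sq_abs]; ring

lemma norm_sub_inner_smul_le (x : E) : ‖x - ⟪w, x⟫ • w‖ ≤ ‖x‖ :=
  pow_le_pow_iff_left₀ (norm_nonneg _) (norm_nonneg _) two_ne_zero |>.1 <| by
    rw [norm_sub_inner_smul_sq hw]; linarith [sq_nonneg ⟪w, x⟫]

lemma norm_rankOne_sub_rankOne_le {u : E} (hu : ‖u‖ = 1) :
    ‖rankOne ℝ u u - rankOne ℝ w w‖ ≤ 3 * ‖u - ⟪w, u⟫ • w‖ := by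
  set c := ⟪w, u⟫
  set v := u - c • w
  have hv_sq : ‖v‖ ^ 2 = 1 - c ^ 2 := by rw [norm_sub_inner_smul_sq hw, hu, one_pow]
  have hv_le : ‖v‖ ≤ 1 := hu ▸ norm_sub_inner_smul_le hw u
  have hc : |c| ≤ 1 := hu ▸ abs_inner_le_of_norm_eq_one hw u
  refine ContinuousLinearMap.opNorm_le_bound _ (by positivity) fun x ↦ ?_
  have hux : ⟪u, x⟫ = c * ⟪w, x⟫ + ⟪v, x⟫ := by
    simp only [v, inner_sub_left, inner_smul_left, RCLike.conj_to_real]; ring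
  have hdecomp : (rankOne ℝ u u - rankOne ℝ w w) x
      = ⟪u, x⟫ • v + (c * ⟪v, x⟫) • w - (‖v‖ ^ 2 * ⟪w, x⟫) • w := by
    have hu' : u = c • w + v := by simp [v]
    rw [_root_.sub_apply, rankOne_apply, rankOne_apply, hv_sq]
    nth_rw 2 [hu']
    rw [hux]
    module
  have h₁ : |⟪u, x⟫| ≤ ‖x‖ := hu ▸ abs_real_inner_le_norm u x |>.trans_eq (one_mul _)
  have h₂ : |c| * |⟪v, x⟫| ≤ ‖v‖ * ‖x‖ :=
    (mul_le_of_le_one_left (abs_nonneg _) hc).trans (abs_real_inner_le_norm v x)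
  have h₃ : ‖v‖ ^ 2 * |⟪w, x⟫| ≤ ‖v‖ * ‖x‖ := by
    rw [sq, mul_assoc]
    exact mul_le_mul_of_nonneg_left
      (mul_le_of_le_one_left (abs_nonneg _) hv_le |>.trans (abs_inner_le_of_norm_eq_one hw x))
      (norm_nonneg v)
  rw [hdecomp]
  refine (norm_sub_le _ _).trans ((add_le_add (norm_add_le _ _) le_rfl).trans ?_)
  simp only [norm_smul, norm_mul, norm_pow, abs_norm, Real.norm_eq_abs, hw, mul_one]
  nlinarith [mul_le_mul_of_nonneg_right h₁ (norm_nonneg v)]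

lemma mul_norm_sub_inner_smul_le_of_rankOne_add {B : E →L[ℝ] E} {lam μ : ℝ} {u : E}
    (hu : ‖u‖ = 1) (hAu : (lam • rankOne ℝ w w + B) u = μ • u)
    (hμ : ⟪(lam • rankOne ℝ w w + B) w, w⟫ ≤ μ) :
    (lam - 2 * ‖B‖) * ‖u - ⟪w, u⟫ • w‖ ≤ ‖B w‖ := by
  set c := ⟪w, u⟫
  set v := u - c • w
  set P : E →L[ℝ] E := ContinuousLinearMap.id ℝ E - rankOne ℝ w w
  have hP (x : E) : P x = x - ⟪w, x⟫ • w := rfl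
  have hPw : P w = 0 := by rw [hP, real_inner_self_eq_norm_sq, hw]; simp
  have hμv : μ • v = c • P (B w) + P (B v) := by
    have hu' : u = c • w + v := by simp [v]
    calc μ • v = P ((lam • rankOne ℝ w w + B) u) := by rw [hAu, map_smul, hP]
      _ = P (B (c • w + v)) := by
          rw [_root_.add_apply, _root_.smul_apply, rankOne_apply, map_add, map_smul, map_smul, hPw,
            smul_zero, smul_zero, zero_add, ← hu']
      _ = c • P (B w) + P (B v) := by rw [map_add, map_add, map_smul, map_smul]
  have hBww : |⟪B w, w⟫| ≤ ‖B‖ :=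
    (abs_real_inner_le_norm _ _).trans <| by simpa [hw] using B.le_opNorm w
  have hμ' : lam + ⟪B w, w⟫ ≤ μ := by
    simpa [inner_add_left, inner_smul_left, real_inner_self_eq_norm_sq, hw] using hμ
  have hc : |c| ≤ 1 := hu ▸ abs_inner_le_of_norm_eq_one hw u
  have hPBw : ‖c • P (B w)‖ ≤ ‖B w‖ := by
    rw [norm_smul, Real.norm_eq_abs]
    exact mul_le_of_le_one_left (norm_nonneg _) hc |>.trans (norm_sub_inner_smul_le hw _)
  have hPBv : ‖P (B v)‖ ≤ ‖B‖ * ‖v‖ := (norm_sub_inner_smul_le hw _).trans (B.le_opNorm v)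
  have hμ_le : μ * ‖v‖ ≤ ‖B w‖ + ‖B‖ * ‖v‖ :=
    calc μ * ‖v‖ ≤ ‖μ • v‖ := by
          rw [norm_smul, Real.norm_eq_abs]
          exact mul_le_mul_of_nonneg_right (le_abs_self μ) (norm_nonneg v)
      _ ≤ ‖B w‖ + ‖B‖ * ‖v‖ := hμv ▸ (norm_add_le _ _).trans (add_le_add hPBw hPBv)
  nlinarith [abs_le.1 hBww, norm_nonneg v]

end UnitVector

lemma LinearMap.IsSymmetric.inner_le_of_forall_hasEigenvalue_le [FiniteDimensional ℝ E]
    {T : E →ₗ[ℝ] E} (hT : T.IsSymmetric) {μ : ℝ}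
    (hμ : ∀ ν, Module.End.HasEigenvalue T ν → ν ≤ μ) (x : E) :
    ⟪T x, x⟫ ≤ μ * ‖x‖ ^ 2 := by
  rcases eq_or_ne x 0 with rfl | hx
  · simp
  have : Nontrivial E := ⟨x, 0, hx⟩
  have hbdd : BddAbove (Set.range fun y : {y : E // y ≠ 0} ↦ ⟪T y, y⟫ / ‖(y : E)‖ ^ 2) :=
    ⟨‖LinearMap.toContinuousLinearMap T‖, Set.forall_mem_range.2 fun y ↦ (le_abs_self _).trans
      (ContinuousLinearMap.rayleighQuotient_le_norm (LinearMap.toContinuousLinearMap T) y)⟩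
  have hx' := (le_ciSup hbdd ⟨x, hx⟩).trans (hμ _ hT.hasEigenvalue_iSup_of_finiteDimensional)
  rwa [div_le_iff₀ (by positivity)] at hx'

end InnerProductSpace

section Matrix

variable {m n : Type*} [Fintype n]

lemma norm_toLp_le_of_abs_le {x : n → ℝ} {c : ℝ} (hc : 0 ≤ c) (hx : ∀ i, |x i| ≤ c) :
    ‖toLp 2 x‖ ≤ √(Fintype.card n) * c := by
  rw [EuclideanSpace.norm_eq, ← Real.sqrt_sq hc, ← Real.sqrt_mul (Nat.cast_nonneg _)]
  gcongr
  calc ∑ i, ‖x i‖ ^ 2 ≤ ∑ _i : n, c ^ 2 := by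
        gcongr with i; rw [Real.norm_eq_abs]; exact hx i
    _ = _ := by simp

lemma dotProduct_self_eq_norm_sq (x : n → ℝ) : x ⬝ᵥ x = ‖toLp 2 x‖ ^ 2 := by
  rw [EuclideanSpace.real_norm_sq_eq]; simp [dotProduct, sq]

lemma norm_toLp_mulVec_le [Fintype m] [DecidableEq n] (A : Matrix m n ℝ) (x : n → ℝ) :
    ‖toLp 2 (A *ᵥ x)‖ ≤ ‖A‖ * ‖toLp 2 x‖ :=
  A.l2_opNorm_mulVec (toLp 2 x)

lemma l2_opNorm_transpose [Fintype m] [DecidableEq m] [DecidableEq n] (A : Matrix m n ℝ) :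
    ‖Aᵀ‖ = ‖A‖ :=
  l2_opNorm_conjTranspose A

lemma l2_opNorm_vecMulVec [Fintype m] [DecidableEq n] (x : m → ℝ) (y : n → ℝ) :
    ‖vecMulVec x y‖ = ‖toLp 2 x‖ * ‖toLp 2 y‖ := by
  have h := InnerProductSpace.symm_toEuclideanLin_rankOne (𝕜 := ℝ) (toLp 2 x) (toLp 2 y)
  simp only [star_trivial] at h
  rw [← norm_rankOne (𝕜 := ℝ), l2_opNorm_def, ← h, LinearEquiv.trans_apply,
    LinearEquiv.apply_symm_apply]
  rfl

lemma l2_opNorm_le_of_abs_le [Fintype m] [DecidableEq n] {A : Matrix m n ℝ} {c : ℝ} (hc : 0 ≤ c)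
    (hA : ∀ i j, |A i j| ≤ c) : ‖A‖ ≤ √(Fintype.card m * Fintype.card n) * c := by
  rw [l2_opNorm_def]
  refine ContinuousLinearMap.opNorm_le_bound _ (by positivity) fun x ↦ ?_
  have hrow (i : m) : |(A *ᵥ ofLp x) i| ≤ √(Fintype.card n) * c * ‖x‖ :=
    calc |(A *ᵥ ofLp x) i| = |⟪toLp 2 (A i), x⟫| := by
          simp [mulVec, dotProduct, PiLp.inner_apply, mul_comm]
      _ ≤ ‖toLp 2 (A i)‖ * ‖x‖ := abs_real_inner_le_norm _ _
      _ ≤ √(Fintype.card n) * c * ‖x‖ := by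
          gcongr; exact norm_toLp_le_of_abs_le hc (hA i)
  calc ‖toLp 2 (A *ᵥ ofLp x)‖ ≤ √(Fintype.card m) * (√(Fintype.card n) * c * ‖x‖) :=
        norm_toLp_le_of_abs_le (by positivity) hrow
    _ = _ := by rw [Real.sqrt_mul (Nat.cast_nonneg _)]; ring

lemma toEuclideanCLM_vecMulVec [DecidableEq n] (x y : n → ℝ) :
    toEuclideanCLM (𝕜 := ℝ) (vecMulVec x y) = rankOne ℝ (toLp 2 x) (toLp 2 y) := by
  ext1 z; ext i
  simp [vecMulVec, mulVec, dotProduct, PiLp.inner_apply, mul_comm, Finset.mul_sum, mul_assoc]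

def gramPerturbation (H E : Matrix m n ℝ) (δ : ℝ) : Matrix m m ℝ :=
  δ • (H * Eᵀ + E * Hᵀ) + δ ^ 2 • (E * Eᵀ)

lemma add_smul_mul_transpose_of_eq_vecMulVec {H : Matrix m n ℝ} {x : m → ℝ} {y : n → ℝ}
    (hH : H = vecMulVec x y) (E : Matrix m n ℝ) (δ : ℝ) :
    (H + δ • E) * (H + δ • E)ᵀ = (y ⬝ᵥ y) • vecMulVec x x + gramPerturbation H E δ := by
  have hHH : H * Hᵀ = (y ⬝ᵥ y) • vecMulVec x x := by
    rw [hH, transpose_vecMulVec, vecMulVec_mul_vecMulVec, ← vecMulVec_smul]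
  rw [gramPerturbation, transpose_add, transpose_smul, Matrix.add_mul, Matrix.mul_add,
    Matrix.mul_add, hHH, Matrix.smul_mul, Matrix.mul_smul, Matrix.smul_mul, Matrix.mul_smul,
    smul_smul, ← sq, smul_add]
  abel

variable [Fintype m] [DecidableEq n]

lemma norm_gramPerturbation_le [DecidableEq m] (H E : Matrix m n ℝ) (δ : ℝ) :
    ‖gramPerturbation H E δ‖ ≤ |δ| * (2 * ‖H‖ * ‖E‖ + |δ| * ‖E‖ ^ 2) := by
  have hHE : ‖H * Eᵀ‖ ≤ ‖H‖ * ‖E‖ := (l2_opNorm_mul _ _).trans_eq (by rw [l2_opNorm_transpose])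
  have hEH : ‖E * Hᵀ‖ ≤ ‖H‖ * ‖E‖ :=
    (l2_opNorm_mul _ _).trans_eq (by rw [l2_opNorm_transpose, mul_comm])
  have hEE : ‖E * Eᵀ‖ ≤ ‖E‖ ^ 2 := (l2_opNorm_mul _ _).trans_eq (by rw [l2_opNorm_transpose, sq])
  calc _ ≤ |δ| * (‖H * Eᵀ‖ + ‖E * Hᵀ‖) + |δ| ^ 2 * ‖E * Eᵀ‖ := by
        refine (norm_add_le _ _).trans (add_le_add ?_ ?_) <;> rw [norm_smul, Real.norm_eq_abs]
        · exact mul_le_mul_of_nonneg_left (norm_add_le _ _) (abs_nonneg δ)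
        · rw [abs_pow]
    _ ≤ |δ| * (‖H‖ * ‖E‖ + ‖H‖ * ‖E‖) + |δ| ^ 2 * ‖E‖ ^ 2 := by gcongr
    _ = _ := by ring

lemma norm_gramPerturbation_mulVec_le {H : Matrix m n ℝ} {x : m → ℝ} {y : n → ℝ}
    (hH : H = vecMulVec x y) (E : Matrix m n ℝ) (δ : ℝ) :
    ‖toLp 2 (gramPerturbation H E δ *ᵥ x)‖
      ≤ |δ| * (‖toLp 2 x‖ * ‖toLp 2 y‖ * ‖toLp 2 (Eᵀ *ᵥ x)‖
        + ‖toLp 2 x‖ ^ 2 * ‖toLp 2 (E *ᵥ y)‖ + |δ| * ‖E‖ * ‖toLp 2 (Eᵀ *ᵥ x)‖) := by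
  have h₁ : ‖toLp 2 (H *ᵥ (Eᵀ *ᵥ x))‖ ≤ ‖toLp 2 x‖ * ‖toLp 2 y‖ * ‖toLp 2 (Eᵀ *ᵥ x)‖ :=
    (norm_toLp_mulVec_le _ _).trans_eq (by rw [hH, l2_opNorm_vecMulVec])
  have h₂ : ‖toLp 2 (E *ᵥ (Hᵀ *ᵥ x))‖ ≤ ‖toLp 2 x‖ ^ 2 * ‖toLp 2 (E *ᵥ y)‖ := by
    rw [hH, transpose_vecMulVec, vecMulVec_mulVec, op_smul_eq_smul, mulVec_smul, toLp_smul,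
      norm_smul, dotProduct_self_eq_norm_sq, Real.norm_of_nonneg (sq_nonneg _)]
  have h₃ : ‖toLp 2 (E *ᵥ (Eᵀ *ᵥ x))‖ ≤ ‖E‖ * ‖toLp 2 (Eᵀ *ᵥ x)‖ := norm_toLp_mulVec_le _ _
  rw [gramPerturbation, add_mulVec, smul_mulVec, smul_mulVec, add_mulVec, ← mulVec_mulVec,
    ← mulVec_mulVec, ← mulVec_mulVec, toLp_add, toLp_smul, toLp_smul, toLp_add]
  calc _ ≤ |δ| * (‖toLp 2 (H *ᵥ (Eᵀ *ᵥ x))‖ + ‖toLp 2 (E *ᵥ (Hᵀ *ᵥ x))‖)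
        + |δ| ^ 2 * ‖toLp 2 (E *ᵥ (Eᵀ *ᵥ x))‖ := by
        refine (norm_add_le _ _).trans (add_le_add ?_ ?_) <;> rw [norm_smul, Real.norm_eq_abs]
        · exact mul_le_mul_of_nonneg_left (norm_add_le _ _) (abs_nonneg δ)
        · rw [abs_pow]
    _ ≤ _ := by
        rw [sq, mul_assoc |δ| |δ|, ← mul_add, mul_assoc |δ| ‖E‖]
        gcongr

end Matrix

lemma specNorm_eq_l2_opNorm {m n : ℕ} (A : Matrix (Fin m) (Fin n) ℝ) : specNorm A = ‖A‖ := rfl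

lemma normSq_eq_norm_sq {M : ℕ} (x : Fin M → ℝ) : normSq x = ‖toLp 2 x‖ ^ 2 :=
  (EuclideanSpace.real_norm_sq_eq _).symm

lemma IsTopEigenvector.exists_inner_le {L : ℕ} {A : Matrix (Fin L) (Fin L) ℝ}
    (hA : A.IsHermitian) {u : Fin L → ℝ} (hu : IsTopEigenvector A u) :
    ‖toLp 2 u‖ = 1 ∧ ∃ μ : ℝ, toEuclideanCLM (𝕜 := ℝ) A (toLp 2 u) = μ • toLp 2 u ∧
      ∀ x, ⟪toEuclideanCLM (𝕜 := ℝ) A x, x⟫ ≤ μ * ‖x‖ ^ 2 := by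
  obtain ⟨hu₁, μ, hμ, htop⟩ := hu
  have hu₁' : ‖toLp 2 u‖ = 1 := by
    rw [← pow_eq_one_iff_of_nonneg (norm_nonneg _) two_ne_zero, ← normSq_eq_norm_sq, hu₁]
  have hμ' : toEuclideanCLM (𝕜 := ℝ) A (toLp 2 u) = μ • toLp 2 u := by
    rw [toEuclideanCLM_toLp, hμ, toLp_smul]
  refine ⟨hu₁', μ, hμ', fun x ↦ ?_⟩
  refine (isSymmetric_toEuclideanLin_iff.2 hA).inner_le_of_forall_hasEigenvalue_le
    (fun ν hν ↦ ?_) x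
  obtain ⟨v, hv, hv₀⟩ := hν.exists_hasEigenvector
  exact htop ν (ofLp v) (by simpa using hv₀) (congrArg ofLp (Module.End.mem_eigenspace_iff.1 hv))

theorem mul_specNorm_vecMulVec_sub_le {L K : ℕ} {H E : Matrix (Fin L) (Fin K) ℝ}
    {x : Fin L → ℝ} {y : Fin K → ℝ} (hH : H = vecMulVec x y) (hx : x ≠ 0) {δ : ℝ}
    {u : Fin L → ℝ} (hu : IsTopEigenvector ((H + δ • E) * (H + δ • E)ᵀ) u)
    (hgap : 2 * ‖gramPerturbation H E δ‖ ≤ ‖toLp 2 x‖ ^ 2 * ‖toLp 2 y‖ ^ 2) :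
    (‖toLp 2 x‖ ^ 2 * ‖toLp 2 y‖ ^ 2 - 2 * ‖gramPerturbation H E δ‖) *
        specNorm (vecMulVec u u - (normSq x)⁻¹ • vecMulVec x x)
      ≤ 3 * ‖toLp 2 (gramPerturbation H E δ *ᵥ x)‖ / ‖toLp 2 x‖ := by
  set B := gramPerturbation H E δ
  set s := ‖toLp 2 x‖
  have hs : 0 < s := norm_pos_iff.2 (by simpa using hx)
  obtain ⟨w, hw, hxw⟩ : ∃ w : EuclideanSpace ℝ (Fin L), ‖w‖ = 1 ∧ toLp 2 x = s • w :=
    ⟨s⁻¹ • toLp 2 x, by rw [norm_smul, norm_inv, norm_norm, inv_mul_cancel₀ hs.ne'],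
      by rw [smul_smul, mul_inv_cancel₀ hs.ne', one_smul]⟩
  have hA : toEuclideanCLM (𝕜 := ℝ) ((H + δ • E) * (H + δ • E)ᵀ)
      = (s ^ 2 * ‖toLp 2 y‖ ^ 2) • rankOne ℝ w w + toEuclideanCLM (𝕜 := ℝ) B := by
    rw [add_smul_mul_transpose_of_eq_vecMulVec hH, map_add, map_smul, toEuclideanCLM_vecMulVec,
      hxw, rankOne_smul_smul, smul_smul, dotProduct_self_eq_norm_sq, mul_comm]
  have hherm : ((H + δ • E) * (H + δ • E)ᵀ).IsHermitian := by
    simpa using isHermitian_mul_conjTranspose_self (H + δ • E)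
  obtain ⟨hu₁, μ, hμ, hray⟩ := hu.exists_inner_le hherm
  have hray_w := hray w
  rw [hA, hw, one_pow, mul_one] at hray_w
  have key := mul_norm_sub_inner_smul_le_of_rankOne_add hw hu₁ (hA ▸ hμ) hray_w
  have hBw : ‖toEuclideanCLM (𝕜 := ℝ) B w‖ = ‖toLp 2 (B *ᵥ x)‖ / s := by
    rw [← inv_smul_eq_iff₀ hs.ne'] at hxw
    rw [← hxw, map_smul, toEuclideanCLM_toLp, norm_smul, norm_inv, norm_norm, inv_mul_eq_div]
  rw [l2_opNorm_toEuclideanCLM, hBw] at key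
  rw [specNorm_eq_l2_opNorm, ← l2_opNorm_toEuclideanCLM (vecMulVec u u - _), map_sub, map_smul,
    toEuclideanCLM_vecMulVec, toEuclideanCLM_vecMulVec, hxw, rankOne_smul_smul, normSq_eq_norm_sq,
    smul_smul, inv_mul_cancel₀ (by positivity), one_smul, mul_div_assoc]
  calc _ ≤ (s ^ 2 * ‖toLp 2 y‖ ^ 2 - 2 * ‖B‖) * (3 * ‖toLp 2 u - ⟪w, toLp 2 u⟫ • w‖) :=
        mul_le_mul_of_nonneg_left (norm_rankOne_sub_rankOne_le hw hu₁) (sub_nonneg.2 hgap)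
    _ ≤ _ := by linarith

lemma abs_sum_pow_mul_cos_le {r ξ : ℝ} (hr : 1 ≤ r) (hξ : 0 < Real.sin ξ) (c : ℝ) (M : ℕ) :
    |∑ k ∈ Finset.range M, r ^ k * Real.cos (ξ * k + c)| ≤ (r ^ M + 1) / Real.sin ξ := by
  set z : ℂ := r * Complex.exp (ξ * Complex.I)
  have hz_im : (z - 1).im = r * Real.sin ξ := by simp [z, Complex.exp_ofReal_mul_I_re]
  have hz_one : Real.sin ξ ≤ ‖z - 1‖ :=
    calc Real.sin ξ ≤ r * Real.sin ξ := le_mul_of_one_le_left hξ.le hr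
      _ ≤ ‖z - 1‖ := hz_im ▸ (le_abs_self _).trans (Complex.abs_im_le_norm _)
  have hz_ne : z ≠ 1 := fun h ↦ by simp [h] at hz_one; linarith
  have hz_norm : ‖z‖ = r := by
    simp [z, Complex.norm_exp_ofReal_mul_I, abs_of_pos (by linarith : (0 : ℝ) < r)]
  have hterm (k : ℕ) : r ^ k * Real.cos (ξ * k + c) = (Complex.exp (c * Complex.I) * z ^ k).re := by
    rw [mul_pow, ← Complex.exp_nat_mul, mul_left_comm, ← Complex.exp_add, ← Complex.ofReal_pow,
      show (c : ℂ) * Complex.I + k * (ξ * Complex.I) = ((ξ * k + c : ℝ) : ℂ) * Complex.I by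
        push_cast; ring,
      Complex.re_ofReal_mul, Complex.exp_ofReal_mul_I_re]
  rw [Finset.sum_congr rfl fun k _ ↦ hterm k, ← Complex.re_sum, ← Finset.mul_sum,
    geom_sum_eq hz_ne]
  calc |(Complex.exp (c * Complex.I) * ((z ^ M - 1) / (z - 1))).re|
      ≤ ‖Complex.exp (c * Complex.I) * ((z ^ M - 1) / (z - 1))‖ := Complex.abs_re_le_norm _
    _ = ‖z ^ M - 1‖ / ‖z - 1‖ := by
        rw [norm_mul, Complex.norm_exp_ofReal_mul_I, one_mul, norm_div]
    _ ≤ (r ^ M + 1) / Real.sin ξ := by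
        gcongr
        exact (norm_sub_le _ _).trans (by rw [norm_pow, hz_norm, norm_one])

section Discretization
variable {a T : ℝ} {N M : ℕ}

lemma Hd_eq_vecMulVec (ha : 0 < a) (L K : ℕ) :
    Hd a T N L K = vecMulVec (Wd a T N L) (Wd a T N K) := by
  ext i j
  simp only [Hd, xdisc, Wd, of_apply, vecMulVec_apply, ← Real.rpow_add ha]
  congr 1
  push_cast
  ring

lemma rpow_div_pow (ha : 0 < a) (k : ℕ) : (a ^ (T / N)) ^ k = a ^ ((k : ℝ) * T / N) := by
  rw [← Real.rpow_natCast, ← Real.rpow_mul ha.le]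
  ring_nf

lemma rpow_mul_div_le (ha : 1 ≤ a) (hT : 0 ≤ T) {k : ℕ} (hk : k ≤ N) :
    a ^ ((k : ℝ) * T / N) ≤ a ^ T := by
  refine Real.rpow_le_rpow_of_exponent_le ha ?_
  rw [mul_div_right_comm]
  exact mul_le_of_le_one_left hT (div_le_one_of_le₀ (by exact_mod_cast hk) (Nat.cast_nonneg N))

lemma one_le_Wd (ha : 1 ≤ a) (hT : 0 ≤ T) (i : Fin M) : 1 ≤ Wd a T N M i :=
  Real.one_le_rpow ha (by positivity)

lemma Wd_le (ha : 1 ≤ a) (hT : 0 ≤ T) (hM : M ≤ N) (i : Fin M) : Wd a T N M i ≤ a ^ T :=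
  rpow_mul_div_le ha hT (i.2.le.trans hM)

lemma natCast_le_norm_Wd_sq (ha : 1 ≤ a) (hT : 0 ≤ T) : (M : ℝ) ≤ ‖toLp 2 (Wd a T N M)‖ ^ 2 := by
  rw [EuclideanSpace.real_norm_sq_eq]
  calc (M : ℝ) = ∑ _i : Fin M, 1 := by simp
    _ ≤ _ := by gcongr with i; exact one_le_pow₀ (one_le_Wd ha hT i)

lemma mul_mul_sq_le_norm_Wd_sq_mul_norm_Wd_sq (ha : 1 ≤ a) (hT : 0 ≤ T) {β γ : ℝ}
    (hγ : 0 ≤ γ) {L K : ℕ} (hL : β * N ≤ L) (hK : γ * N ≤ K) :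
    β * γ * N ^ 2 ≤ ‖toLp 2 (Wd a T N L)‖ ^ 2 * ‖toLp 2 (Wd a T N K)‖ ^ 2 :=
  calc β * γ * N ^ 2 = (β * N) * (γ * N) := by ring
    _ ≤ L * K := mul_le_mul hL hK (by positivity) (Nat.cast_nonneg L)
    _ ≤ _ := mul_le_mul (natCast_le_norm_Wd_sq ha hT) (natCast_le_norm_Wd_sq ha hT)
        (Nat.cast_nonneg K) (sq_nonneg _)

lemma norm_Wd_le (ha : 1 ≤ a) (hT : 0 ≤ T) (hM : M ≤ N) : ‖toLp 2 (Wd a T N M)‖ ≤ √N * a ^ T := by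
  refine (norm_toLp_le_of_abs_le (c := a ^ T) (by positivity) fun i ↦ ?_).trans ?_
  · rw [abs_of_nonneg (zero_le_one.trans (one_le_Wd ha hT i))]; exact Wd_le ha hT hM i
  · simp only [Fintype.card_fin]; gcongr

lemma Ed_transpose (ξ φ : ℝ) (L K : ℕ) : (Ed ξ φ L K)ᵀ = Ed ξ φ K L := by
  ext i j; simp [Ed, add_comm]

lemma norm_Ed_le {ξ φ : ℝ} {L K : ℕ} (hL : L ≤ N) (hK : K ≤ N) : ‖Ed ξ φ L K‖ ≤ N := by
  refine (l2_opNorm_le_of_abs_le zero_le_one fun i j ↦ Real.abs_cos_le_one _).trans ?_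
  rw [mul_one, Fintype.card_fin, Fintype.card_fin, ← Real.sqrt_sq (Nat.cast_nonneg N), sq]
  gcongr

lemma abs_Ed_mulVec_Wd_le {ξ φ : ℝ} (ha : 1 < a) (hT : 0 ≤ T) (hξ : 0 < Real.sin ξ)
    {L K : ℕ} (hK : K ≤ N) (i : Fin L) :
    |(Ed ξ φ L K *ᵥ Wd a T N K) i| ≤ (a ^ T + 1) / Real.sin ξ := by
  have ha0 : 0 < a := by linarith
  set f : ℕ → ℝ := fun k ↦ (a ^ (T / N)) ^ k * Real.cos (ξ * k + (ξ * i + φ))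
  have hsum : (Ed ξ φ L K *ᵥ Wd a T N K) i = ∑ k ∈ Finset.range K, f k := by
    rw [← Fin.sum_univ_eq_sum_range f K, mulVec, dotProduct]
    refine Finset.sum_congr rfl fun k _ ↦ ?_
    rw [Ed, of_apply, Wd, ← rpow_div_pow ha0, mul_comm]
    congr 2; push_cast; ring
  rw [hsum]
  refine (abs_sum_pow_mul_cos_le (Real.one_le_rpow ha.le (by positivity)) hξ _ K).trans ?_
  rw [rpow_div_pow ha0]
  exact div_le_div_of_nonneg_right (by linarith [rpow_mul_div_le ha.le hT hK]) hξ.le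

lemma norm_Ed_mulVec_Wd_le {ξ φ : ℝ} (ha : 1 < a) (hT : 0 ≤ T) (hξ : 0 < Real.sin ξ)
    {L K : ℕ} (hL : L ≤ N) (hK : K ≤ N) :
    ‖toLp 2 (Ed ξ φ L K *ᵥ Wd a T N K)‖ ≤ √N * ((a ^ T + 1) / Real.sin ξ) := by
  refine (norm_toLp_le_of_abs_le (by positivity) (abs_Ed_mulVec_Wd_le ha hT hξ hK)).trans ?_
  rw [Fintype.card_fin]
  gcongr

lemma Bmat_eq_gramPerturbation (a T ξ φ δ : ℝ) (N L K : ℕ) :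
    Bmat a T ξ φ δ N L K = gramPerturbation (Hd a T N L K) (Ed ξ φ L K) δ :=
  rfl

lemma norm_Bmat_le {ξ φ δ : ℝ} (ha : 1 ≤ a) (hT : 0 ≤ T) {L K : ℕ} (hL : L ≤ N) (hK : K ≤ N)
    (hδ : |δ| ≤ 1) : ‖Bmat a T ξ φ δ N L K‖ ≤ |δ| * ((2 * (a ^ T) ^ 2 + 1) * N ^ 2) := by
  have hH : ‖Hd a T N L K‖ ≤ N * (a ^ T) ^ 2 := by
    rw [Hd_eq_vecMulVec (by linarith), l2_opNorm_vecMulVec]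
    calc _ ≤ (√N * a ^ T) * (√N * a ^ T) :=
          mul_le_mul (norm_Wd_le ha hT hL) (norm_Wd_le ha hT hK) (norm_nonneg _) (by positivity)
      _ = N * (a ^ T) ^ 2 := by rw [mul_mul_mul_comm, Real.mul_self_sqrt (Nat.cast_nonneg N), sq]
  have hE := norm_Ed_le (ξ := ξ) (φ := φ) hL hK
  rw [Bmat_eq_gramPerturbation]
  refine (norm_gramPerturbation_le _ _ δ).trans ?_
  gcongr
  calc _ ≤ 2 * (N * (a ^ T) ^ 2) * N + 1 * (N : ℝ) ^ 2 := by gcongr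
    _ = _ := by ring

lemma norm_Bmat_mulVec_Wd_le {ξ φ δ : ℝ} (ha : 1 < a) (hT : 0 ≤ T) (hξ : 0 < Real.sin ξ)
    {L K : ℕ} (hL : L ≤ N) (hK : K ≤ N) (hδ : |δ| ≤ 1) :
    ‖toLp 2 (Bmat a T ξ φ δ N L K *ᵥ Wd a T N L)‖
      ≤ |δ| * ((2 * (a ^ T) ^ 2 + 1) * ((a ^ T + 1) / Real.sin ξ) * (N * √N)) := by
  have hx := norm_Wd_le (N := N) (M := L) ha.le hT hL
  have hy := norm_Wd_le (N := N) (M := K) ha.le hT hK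
  have hEx : ‖toLp 2 ((Ed ξ φ L K)ᵀ *ᵥ Wd a T N L)‖ ≤ √N * ((a ^ T + 1) / Real.sin ξ) := by
    rw [Ed_transpose]; exact norm_Ed_mulVec_Wd_le ha hT hξ hK hL
  have hEy := norm_Ed_mulVec_Wd_le (φ := φ) ha hT hξ hL hK
  have hE := norm_Ed_le (ξ := ξ) (φ := φ) hL hK
  have hN := Real.mul_self_sqrt (Nat.cast_nonneg N)
  rw [Bmat_eq_gramPerturbation]
  refine (norm_gramPerturbation_mulVec_le (Hd_eq_vecMulVec (T := T) (N := N) (by linarith) L K) _ δ).trans ?_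
  gcongr
  calc _ ≤ (√N * a ^ T) * (√N * a ^ T) * (√N * ((a ^ T + 1) / Real.sin ξ))
        + (√N * a ^ T) ^ 2 * (√N * ((a ^ T + 1) / Real.sin ξ))
        + 1 * N * (√N * ((a ^ T + 1) / Real.sin ξ)) := by gcongr
    _ = _ := by linear_combination (2 * (a ^ T) ^ 2 * √N * ((a ^ T + 1) / Real.sin ξ)) * hN

end Discretization

lemma specNorm_vecMulVec_sub_le_div {a T ξ φ β γ δ : ℝ} (ha : 1 < a) (hT : 0 ≤ T)
    (hξ : 0 < Real.sin ξ) (hβ : 0 < β) (hγ : 0 < γ) {N L K : ℕ} (hN : 0 < N) (hLN : L ≤ N)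
    (hKN : K ≤ N) (hL : β * N ≤ L) (hK : γ * N ≤ K) (hδ₁ : |δ| ≤ 1)
    (hδ : |δ| ≤ β * γ / (4 * (2 * (a ^ T) ^ 2 + 1))) {u : Fin L → ℝ}
    (hu : IsTopEigenvector ((Hd a T N L K + δ • Ed ξ φ L K) * (Hd a T N L K + δ • Ed ξ φ L K)ᵀ) u) :
    specNorm (vecMulVec u u - (normSq (Wd a T N L))⁻¹ • vecMulVec (Wd a T N L) (Wd a T N L))
      ≤ 6 * (2 * (a ^ T) ^ 2 + 1) * ((a ^ T + 1) / Real.sin ξ) / (β * γ * √β) / N := by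
  set D := 2 * (a ^ T) ^ 2 + 1
  set C₀ := (a ^ T + 1) / Real.sin ξ
  have hN' : (0 : ℝ) < N := Nat.cast_pos.2 hN
  have hx : √β * √N ≤ ‖toLp 2 (Wd a T N L)‖ := by
    rw [← Real.sqrt_mul hβ.le, ← Real.sqrt_sq (norm_nonneg _)]
    exact Real.sqrt_le_sqrt (hL.trans (natCast_le_norm_Wd_sq ha.le hT))
  have hx₀ : 0 < ‖toLp 2 (Wd a T N L)‖ := lt_of_lt_of_le (by positivity) hx
  have hlam := mul_mul_sq_le_norm_Wd_sq_mul_norm_Wd_sq ha.le hT hγ.le hL hK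
  have hB : 2 * ‖Bmat a T ξ φ δ N L K‖ ≤ β * γ * N ^ 2 / 2 := by
    have := norm_Bmat_le (ξ := ξ) (φ := φ) ha.le hT hLN hKN hδ₁
    rw [le_div_iff₀ (by positivity)] at hδ
    nlinarith
  have hBx : 3 * ‖toLp 2 (Bmat a T ξ φ δ N L K *ᵥ Wd a T N L)‖ / ‖toLp 2 (Wd a T N L)‖
      ≤ 3 * D * C₀ * N / √β := by
    have := norm_Bmat_mulVec_Wd_le (φ := φ) ha hT hξ hLN hKN hδ₁
    rw [div_le_div_iff₀ hx₀ (by positivity)]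
    calc _ ≤ 3 * (1 * (D * C₀ * (N * √N))) * √β := by gcongr; exact this.trans (by gcongr)
      _ = 3 * D * C₀ * N * (√β * √N) := by ring
      _ ≤ _ := by gcongr
  have hlam₀ : 0 ≤ β * γ * N ^ 2 := by positivity
  rw [Bmat_eq_gramPerturbation] at hB hBx
  have key := mul_specNorm_vecMulVec_sub_le (Hd_eq_vecMulVec (T := T) (N := N) (by linarith) L K)
    (fun h ↦ by simp [h] at hx₀) hu (by linarith)
  set S := specNorm (vecMulVec u u - (normSq (Wd a T N L))⁻¹ • vecMulVec (Wd a T N L) (Wd a T N L))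
  have hS : β * γ * N ^ 2 / 2 * S ≤ 3 * D * C₀ * N / √β :=
    (mul_le_mul_of_nonneg_right (by linarith) (norm_nonneg _)).trans (key.trans hBx)
  rw [le_div_iff₀ (by positivity)] at hS
  rw [div_div, le_div_iff₀ (by positivity)]
  nlinarith

lemma eventually_le_and_mul_le {α : ℝ} (hα : α ∈ Set.Ioo (0 : ℝ) 1) {L K : ℕ → ℕ}
    (hLK : ∀ N, 3 ≤ N → 1 < L N ∧ 1 < K N ∧ L N + K N = N + 1)
    (hlim : Tendsto (fun N : ℕ => (L N : ℝ) / (N : ℝ)) atTop (nhds α)) :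
    ∀ᶠ N in atTop, 0 < N ∧ L N ≤ N ∧ K N ≤ N ∧ α / 2 * N ≤ L N ∧ (1 - α) / 2 * N ≤ K N := by
  have hIoo : Set.Ioo (α / 2) ((1 + α) / 2) ∈ nhds α :=
    Ioo_mem_nhds (by linarith [hα.1]) (by linarith [hα.2])
  filter_upwards [hlim hIoo, eventually_ge_atTop 3] with N ⟨hlo, hhi⟩ hN
  obtain ⟨hL, hK, hsum⟩ := hLK N hN
  have hN' : (0 : ℝ) < N := by positivity
  rw [lt_div_iff₀ hN'] at hlo
  rw [div_lt_iff₀ hN'] at hhi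
  have hsum' : (L N : ℝ) + K N = N + 1 := by exact_mod_cast hsum
  exact ⟨by omega, by omega, by omega, hlo.le, by linarith⟩

theorem stmt_12_general (a T ξ φ α : ℝ) (ha : 1 < a) (hT : 0 < T)
    (hξ : ξ ∈ Set.Ioo 0 Real.pi)
    (hα : α ∈ Set.Ioo (0 : ℝ) 1)
    (L K : ℕ → ℕ)
    (hLK : ∀ N, 3 ≤ N → 1 < L N ∧ 1 < K N ∧ L N + K N = N + 1)
    (hlim : Tendsto (fun N : ℕ => (L N : ℝ) / (N : ℝ)) atTop (nhds α)) :
    ∃ δ₀ > (0 : ℝ), ∃ C > (0 : ℝ), ∃ N₀ : ℕ, ∀ δ : ℝ, |δ| ≤ δ₀ → ∀ N, N₀ ≤ N →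
      ∀ u : Fin (L N) → ℝ,
        IsTopEigenvector
          ((Hd a T N (L N) (K N) + δ • Ed ξ φ (L N) (K N)) *
            (Hd a T N (L N) (K N) + δ • Ed ξ φ (L N) (K N))ᵀ) u →
        specNorm (Matrix.vecMulVec u u -
            (normSq (Wd a T N (L N)))⁻¹ •
              Matrix.vecMulVec (Wd a T N (L N)) (Wd a T N (L N))) ≤
          C / (N : ℝ) := by
  obtain ⟨N₀, hN₀⟩ := (eventually_le_and_mul_le hα hLK hlim).exists_forall_of_atTop
  have hξ' : 0 < Real.sin ξ := Real.sin_pos_of_pos_of_lt_pi hξ.1 hξ.2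
  have hβ : 0 < α / 2 := by linarith [hα.1]
  have hγ : 0 < (1 - α) / 2 := by linarith [hα.2]
  refine ⟨min 1 (α / 2 * ((1 - α) / 2) / (4 * (2 * (a ^ T) ^ 2 + 1))), by positivity,
    6 * (2 * (a ^ T) ^ 2 + 1) * ((a ^ T + 1) / Real.sin ξ) / (α / 2 * ((1 - α) / 2) * √(α / 2)),
    by positivity, N₀, fun δ hδ N hN u hu ↦ ?_⟩
  obtain ⟨hN, hLN, hKN, hL, hK⟩ := hN₀ N hN
  exact specNorm_vecMulVec_sub_le_div ha hT.le hξ' hβ hγ hN hLN hKN hL hK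
    (hδ.trans (min_le_left _ _)) (hδ.trans (min_le_right _ _)) hu

/-- in the discretization scheme, `‖P₀⊥(δ) - P₀⊥‖ = O(1/N)` for
sufficiently small `δ`, where `P₀⊥(δ) = u uᵀ` for a top unit eigenvector `u`
of `H(δ)H(δ)ᵀ`. -/
theorem stmt_12 (a T ξ φ α : ℝ) (ha : 1 < a) (hT : 0 < T)
    (hξ : ξ ∈ Set.Ioo 0 Real.pi) (hφ : φ ∈ Set.Ico 0 (2 * Real.pi))
    (hα : α ∈ Set.Ioo (0 : ℝ) 1)
    (L K : ℕ → ℕ)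
    (hLK : ∀ N, 3 ≤ N → 1 < L N ∧ 1 < K N ∧ L N + K N = N + 1)
    (hlim : Tendsto (fun N : ℕ => (L N : ℝ) / (N : ℝ)) atTop (nhds α)) :
    ∃ δ₀ > (0 : ℝ), ∃ C > (0 : ℝ), ∃ N₀ : ℕ, ∀ δ : ℝ, |δ| ≤ δ₀ → ∀ N, N₀ ≤ N →
      ∀ u : Fin (L N) → ℝ,
        IsTopEigenvector
          ((Hd a T N (L N) (K N) + δ • Ed ξ φ (L N) (K N)) *
            (Hd a T N (L N) (K N) + δ • Ed ξ φ (L N) (K N))ᵀ) u →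
        specNorm (Matrix.vecMulVec u u -
            (normSq (Wd a T N (L N)))⁻¹ •
              Matrix.vecMulVec (Wd a T N (L N)) (Wd a T N (L N))) ≤
          C / (N : ℝ) :=
  stmt_12_general a T ξ φ α ha hT hξ hα L K hLK hlim
end

section
/- Let Z = Z(N, δ) = (δ/μ)·P₀ EEᵀ P₀. There exist a constant C₂ > 0 and an integer N₀ such that for every N ≥ N₀ and every δ ∈ ℝ: ‖Z‖_max ≤ |δ|·C₂/N. -/
open Filter Matrix

/-- max-norm bound `‖Z‖_max ≤ |δ|C₂/N` for
`Z = (δ/μ)·P₀ EEᵀ P₀` in the discretization scheme. -/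
theorem stmt_14 (a T ξ φ α : ℝ) (ha : 1 < a) (hT : 0 < T)
    (hξ : ξ ∈ Set.Ioo 0 Real.pi) (hφ : φ ∈ Set.Ico 0 (2 * Real.pi))
    (hα : α ∈ Set.Ioo (0 : ℝ) 1)
    (L K : ℕ → ℕ)
    (hLK : ∀ N, 3 ≤ N → 1 < L N ∧ 1 < K N ∧ L N + K N = N + 1)
    (hlim : Tendsto (fun N : ℕ => (L N : ℝ) / (N : ℝ)) atTop (nhds α)) :
    ∃ C₂ > (0 : ℝ), ∃ N₀ : ℕ, ∀ N, N₀ ≤ N → ∀ δ : ℝ,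
      maxNorm
        ((δ / (normSq (Wd a T N (L N)) * normSq (Wd a T N (K N)))) •
          (((1 : Matrix (Fin (L N)) (Fin (L N)) ℝ) -
              (normSq (Wd a T N (L N)))⁻¹ •
                Matrix.vecMulVec (Wd a T N (L N)) (Wd a T N (L N))) *
            (Ed ξ φ (L N) (K N) * (Ed ξ φ (L N) (K N))ᵀ) *
            ((1 : Matrix (Fin (L N)) (Fin (L N)) ℝ) -
              (normSq (Wd a T N (L N)))⁻¹ •
                Matrix.vecMulVec (Wd a T N (L N)) (Wd a T N (L N))))) ≤
      |δ| * C₂ / (N : ℝ) := by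
  
  obtain ⟨hα0, hα1⟩ := hα
  set c : ℝ := 1 + a ^ (T : ℝ) * a ^ (T : ℝ) with hc
  have haT : (1:ℝ) ≤ a ^ (T : ℝ) := Real.one_le_rpow ha.le hT.le
  have hcpos : (0:ℝ) < c := by nlinarith
  refine ⟨2 * c ^ 2 / α, by positivity, ?_⟩
  obtain ⟨N₁, hN₁⟩ := eventually_atTop.mp (hlim.eventually (eventually_gt_nhds (by linarith : α / 2 < α)))
  refine ⟨max N₁ 3, fun N hN δ => ?_⟩
  have hN3 : 3 ≤ N := le_trans (le_max_right _ _) hN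
  obtain ⟨hL1, hK1, hLKs⟩ := hLK N hN3
  have hNpos : (0:ℝ) < (N : ℝ) := by positivity
  have hLN := hN₁ N (le_trans (le_max_left _ _) hN)
  set LL := L N with hLL
  set KK := K N with hKK
  have hLle : LL ≤ N := by omega
  set W : Fin LL → ℝ := Wd a T N LL with hW
  set V : Fin KK → ℝ := Wd a T N KK with hV
  -- basic bounds on W
  have hW1 : ∀ i : Fin LL, (1:ℝ) ≤ W i := by
    intro i
    exact Real.one_le_rpow ha.le (by positivity)
  have hWa : ∀ i : Fin LL, W i ≤ a ^ (T : ℝ) := by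
    intro i
    refine (Real.rpow_le_rpow_left_iff ha).2 ?_
    rw [div_le_iff₀ hNpos]
    have : ((i : ℕ) : ℝ) ≤ (N : ℝ) := by
      exact_mod_cast le_trans i.isLt.le hLle
    nlinarith
  have hV1 : ∀ i : Fin KK, (1:ℝ) ≤ V i := by
    intro i
    exact Real.one_le_rpow ha.le (by positivity)
  have hnW : (LL : ℝ) ≤ normSq W := by
    rw [normSq]
    calc (LL:ℝ) = ∑ _i : Fin LL, (1:ℝ) := by simp
    _ ≤ ∑ i, W i ^ 2 := Finset.sum_le_sum fun i _ => by nlinarith [hW1 i]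
  have hnV : (KK : ℝ) ≤ normSq V := by
    rw [normSq]
    calc (KK:ℝ) = ∑ _i : Fin KK, (1:ℝ) := by simp
    _ ≤ ∑ i, V i ^ 2 := Finset.sum_le_sum fun i _ => by nlinarith [hV1 i]
  have hLpos : (0:ℝ) < LL := by exact_mod_cast Nat.lt_of_lt_of_le Nat.zero_lt_one hL1.le
  have hKpos : (0:ℝ) < KK := by exact_mod_cast Nat.lt_of_lt_of_le Nat.zero_lt_one hK1.le
  have hnWpos : (0:ℝ) < normSq W := lt_of_lt_of_le hLpos hnW
  have hnVpos : (0:ℝ) < normSq V := lt_of_lt_of_le hKpos hnV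
  set P : Matrix (Fin LL) (Fin LL) ℝ :=
    (1 : Matrix (Fin LL) (Fin LL) ℝ) - (normSq W)⁻¹ • vecMulVec W W with hP
  set E : Matrix (Fin LL) (Fin KK) ℝ := Ed ξ φ LL KK with hE
  have hvt : (vecMulVec W W)ᵀ = vecMulVec W W := by
    ext i j; simp [vecMulVec_apply, transpose_apply, mul_comm]
  have hPt : Pᵀ = P := by
    rw [hP, transpose_sub, transpose_one, transpose_smul, hvt]
  have hfac : P * (E * Eᵀ) * P = (P * E) * (P * E)ᵀ := by
    rw [transpose_mul, hPt]
    simp only [Matrix.mul_assoc]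
  -- entries of E bounded by 1
  have hEb : ∀ (i : Fin LL) (m : Fin KK), |E i m| ≤ 1 := by
    intro i m
    exact Real.abs_cos_le_one _
  -- bound entries of P * E
  have hPE : ∀ (i : Fin LL) (m : Fin KK), |(P * E) i m| ≤ c := by
    intro i m
    have hform : (P * E) i m
        = E i m - (normSq W)⁻¹ * (W i * ∑ k, W k * E k m) := by
      rw [Matrix.mul_apply]
      have hPik : ∀ k, P i k = (if i = k then (1:ℝ) else 0) - (normSq W)⁻¹ * (W i * W k) := by
        intro k
        simp [hP, Matrix.sub_apply, Matrix.one_apply, Matrix.smul_apply, vecMulVec_apply,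
          smul_eq_mul, mul_assoc]
      simp only [hPik, sub_mul, Finset.sum_sub_distrib, ite_mul, one_mul, zero_mul,
        Finset.sum_ite_eq, Finset.mem_univ, if_true]
      congr 1
      rw [Finset.mul_sum, Finset.mul_sum]
      exact Finset.sum_congr rfl fun k _ => by ring
    have hsum : |∑ k, W k * E k m| ≤ a ^ (T:ℝ) * normSq W := by
      calc |∑ k, W k * E k m| ≤ ∑ k, |W k * E k m| := Finset.abs_sum_le_sum_abs _ _
      _ ≤ ∑ k : Fin LL, a ^ (T:ℝ) := by
          refine Finset.sum_le_sum fun k _ => ?_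
          rw [abs_mul]
          calc |W k| * |E k m| ≤ |W k| * 1 := by
                exact mul_le_mul_of_nonneg_left (hEb k m) (abs_nonneg _)
          _ = |W k| := mul_one _
          _ = W k := abs_of_nonneg (le_trans zero_le_one (hW1 k))
          _ ≤ a ^ (T:ℝ) := hWa k
      _ = (LL : ℝ) * a ^ (T:ℝ) := by simp [mul_comm]
      _ ≤ a ^ (T:ℝ) * normSq W := by nlinarith
    rw [hform]
    have h1 : |E i m - (normSq W)⁻¹ * (W i * ∑ k, W k * E k m)|
        ≤ |E i m| + (normSq W)⁻¹ * (W i * |∑ k, W k * E k m|) := by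
      calc _ ≤ |E i m| + |(normSq W)⁻¹ * (W i * ∑ k, W k * E k m)| := abs_sub _ _
      _ = |E i m| + (normSq W)⁻¹ * (W i * |∑ k, W k * E k m|) := by
          rw [abs_mul, abs_mul, abs_of_nonneg (le_of_lt (inv_pos.2 hnWpos)),
            abs_of_nonneg (le_trans zero_le_one (hW1 i))]
    refine le_trans h1 ?_
    have h2 : (normSq W)⁻¹ * (W i * |∑ k, W k * E k m|)
        ≤ (normSq W)⁻¹ * (a ^ (T:ℝ) * (a ^ (T:ℝ) * normSq W)) := by
      refine mul_le_mul_of_nonneg_left ?_ (le_of_lt (inv_pos.2 hnWpos))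
      refine mul_le_mul (hWa i) hsum (abs_nonneg _) (by positivity)
    have h3 : (normSq W)⁻¹ * (a ^ (T:ℝ) * (a ^ (T:ℝ) * normSq W))
        = a ^ (T:ℝ) * a ^ (T:ℝ) := by
      field_simp
    rw [hc]
    calc |E i m| + (normSq W)⁻¹ * (W i * |∑ k, W k * E k m|)
        ≤ 1 + (normSq W)⁻¹ * (a ^ (T:ℝ) * (a ^ (T:ℝ) * normSq W)) :=
          add_le_add (hEb i m) h2
    _ = 1 + a ^ (T:ℝ) * a ^ (T:ℝ) := by rw [h3]
  -- bound entries of P E Eᵀ P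
  have hPEP : ∀ (i j : Fin LL), |(P * (E * Eᵀ) * P) i j| ≤ (KK : ℝ) * c ^ 2 := by
    intro i j
    rw [hfac, Matrix.mul_apply]
    calc |∑ m, (P * E) i m * (P * E)ᵀ m j| ≤ ∑ m, |(P * E) i m * (P * E)ᵀ m j| :=
        Finset.abs_sum_le_sum_abs _ _
    _ ≤ ∑ _m : Fin KK, c ^ 2 := by
        refine Finset.sum_le_sum fun m _ => ?_
        rw [abs_mul, transpose_apply, sq]
        exact mul_le_mul (hPE i m) (hPE j m) (abs_nonneg _) hcpos.le
    _ = (KK : ℝ) * c ^ 2 := by simp [mul_comm]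
  -- conclude
  have hμpos : (0:ℝ) < normSq W * normSq V := mul_pos hnWpos hnVpos
  have : Nonempty (Fin LL × Fin LL) := ⟨(⟨0, by omega⟩, ⟨0, by omega⟩)⟩
  simp only [maxNorm]
  refine ciSup_le fun p => ?_
  rw [Matrix.smul_apply, smul_eq_mul, abs_mul, abs_div,
    abs_of_pos hμpos]
  have key : |(P * (E * Eᵀ) * P) p.1 p.2| / (normSq W * normSq V) ≤ 2 * c ^ 2 / (α * N) := by
    have h1 : |(P * (E * Eᵀ) * P) p.1 p.2| / (normSq W * normSq V)
        ≤ ((KK:ℝ) * c ^ 2) / ((LL:ℝ) * (KK:ℝ)) := by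
      refine div_le_div₀ (by positivity) (hPEP p.1 p.2) (by positivity) ?_
      exact mul_le_mul hnW hnV hKpos.le hnWpos.le
    refine le_trans h1 ?_
    rw [div_le_div_iff₀ (by positivity) (by positivity)]
    have hLb : α * (N:ℝ) / 2 < (LL:ℝ) := by
      have h := (lt_div_iff₀ hNpos).mp hLN
      linarith
    have h2 : α * (N:ℝ) ≤ 2 * (LL:ℝ) := by linarith
    calc (KK:ℝ) * c ^ 2 * (α * (N:ℝ)) ≤ (KK:ℝ) * c ^ 2 * (2 * (LL:ℝ)) :=
        mul_le_mul_of_nonneg_left h2 (by positivity)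
    _ = 2 * c ^ 2 * ((LL:ℝ) * (KK:ℝ)) := by ring
  have key2 : |(P * (E * Eᵀ) * P) p.1 p.2| / (normSq W * normSq V)
      ≤ (2 * c ^ 2 / α) / (N : ℝ) := by rw [div_div]; exact key
  calc |δ| / (normSq W * normSq V) * |(P * (E * Eᵀ) * P) p.1 p.2|
      = |δ| * (|(P * (E * Eᵀ) * P) p.1 p.2| / (normSq W * normSq V)) := by
        rw [div_mul_eq_mul_div, mul_div_assoc]
  _ ≤ |δ| * ((2 * c ^ 2 / α) / (N : ℝ)) := mul_le_mul_of_nonneg_left key2 (abs_nonneg _)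
  _ = |δ| * (2 * c ^ 2 / α) / (N : ℝ) := (mul_div_assoc _ _ _).symm
end
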